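/- Let R be a commutative ring and S a multiplicative subset of R. (1) If B is a u-S-quasi-projective R-module, then a short exact sequence 0 → A →f B →g C → 0 of R-modules is u-S-split if and only if C is u-S-projective relative to B. (2) If B is a u-S-quasi-injective R-module, then a short exact sequence 0 → A →f B →g C → 0 is u-S-split if and only if A is u-S-injective relative to B. -/

import Mathlib

universe u v w

variable (R : Type u) [CommRing R]

/-- An `R`-module `T` is uniformly `S`-torsion if there is `s ∈ S` with `s • T = 0`. -/
def IsUSTorsion (S : Submonoid R) (T : Type*) [AddCommGroup T] [Module R T] : Prop :=
  ∃ s ∈ S, ∀ t : T, s • t = 0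

/-- `f` is a `u`-`S`-epimorphism if its cokernel is uniformly `S`-torsion. -/
def IsUSEpi (S : Submonoid R) {M N : Type*} [AddCommGroup M] [Module R M]
    [AddCommGroup N] [Module R N] (f : M →ₗ[R] N) : Prop :=
  IsUSTorsion R S (N ⧸ LinearMap.range f)

/-- `f` is a `u`-`S`-monomorphism if its kernel is uniformly `S`-torsion. -/
def IsUSMono (S : Submonoid R) {M N : Type*} [AddCommGroup M] [Module R M]
    [AddCommGroup N] [Module R N] (f : M →ₗ[R] N) : Prop :=
  IsUSTorsion R S (LinearMap.ker f)

/-- `P` is `u`-`S`-projective relative to `M` if for every `u`-`S`-epimorphism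
`f : M → N`, the induced map `Hom(P,M) → Hom(P,N)` is a `u`-`S`-epimorphism. -/
def IsUSProjRel (S : Submonoid R) (P : Type w) [AddCommGroup P] [Module R P]
    (M : Type v) [AddCommGroup M] [Module R M] : Prop :=
  ∀ (N : Type v) [AddCommGroup N] [Module R N] (f : M →ₗ[R] N),
    IsUSEpi R S f → IsUSEpi R S ((LinearMap.llcomp R P M N :
      (M →ₗ[R] N) →ₗ[R] (P →ₗ[R] M) →ₗ[R] P →ₗ[R] N) f)

/-- `E` is `u`-`S`-injective relative to `M` if for every `u`-`S`-monomorphism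
`f : K → M`, the induced map `Hom(M,E) → Hom(K,E)` is a `u`-`S`-epimorphism. -/
def IsUSInjRel (S : Submonoid R) (E : Type w) [AddCommGroup E] [Module R E]
    (M : Type v) [AddCommGroup M] [Module R M] : Prop :=
  ∀ (K : Type v) [AddCommGroup K] [Module R K] (f : K →ₗ[R] M),
    IsUSMono R S f → IsUSEpi R S (LinearMap.lcomp R E f)

section Aux

variable {R : Type u} [CommRing R] {S : Submonoid R}

lemma isUSEpi_iff' {M N : Type*} [AddCommGroup M] [Module R M] [AddCommGroup N] [Module R N]
    (f : M →ₗ[R] N) : IsUSEpi R S f ↔ ∃ s ∈ S, ∀ n : N, ∃ m, f m = s • n := by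
  constructor
  · rintro ⟨s, hs, h⟩
    refine ⟨s, hs, fun n => ?_⟩
    have := h (Submodule.Quotient.mk n)
    rw [← Submodule.Quotient.mk_smul, Submodule.Quotient.mk_eq_zero] at this
    exact this
  · rintro ⟨s, hs, h⟩
    refine ⟨s, hs, fun t => ?_⟩
    obtain ⟨n, rfl⟩ := Submodule.Quotient.mk_surjective _ t
    rw [← Submodule.Quotient.mk_smul, Submodule.Quotient.mk_eq_zero]
    exact h n

lemma isUSEpi_of_surj {M N : Type*} [AddCommGroup M] [Module R M] [AddCommGroup N] [Module R N]
    {f : M →ₗ[R] N} (hf : Function.Surjective f) : IsUSEpi R S f :=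
  (isUSEpi_iff' f).2 ⟨1, one_mem S, fun n => by
    obtain ⟨m, hm⟩ := hf n; exact ⟨m, by simp [hm]⟩⟩

lemma isUSMono_of_inj {M N : Type*} [AddCommGroup M] [Module R M] [AddCommGroup N] [Module R N]
    {f : M →ₗ[R] N} (hf : Function.Injective f) : IsUSMono R S f :=
  ⟨1, one_mem S, fun t => by
    have : (t : M) = 0 := hf (by simpa using t.2)
    simpa [one_smul] using Subtype.ext this⟩

end Aux

theorem stmt19 (S : Submonoid R) (hS : (0 : R) ∉ S)
    (A B C : Type v)
    [AddCommGroup A] [Module R A] [AddCommGroup B] [Module R B]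
    [AddCommGroup C] [Module R C]
    (f : A →ₗ[R] B) (g : B →ₗ[R] C)
    (hf : Function.Injective f) (hg : Function.Surjective g)
    (hex : LinearMap.range f = LinearMap.ker g) :
    (IsUSProjRel R S B B →
      ((∃ s ∈ S, ∃ f' : B →ₗ[R] A, f' ∘ₗ f = s • LinearMap.id) ↔
        IsUSProjRel R S C B)) ∧
    (IsUSInjRel R S B B →
      ((∃ s ∈ S, ∃ f' : B →ₗ[R] A, f' ∘ₗ f = s • LinearMap.id) ↔
        IsUSInjRel R S A B)) := by
  have hgf : ∀ a : A, g (f a) = 0 := fun a => by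
    have : f a ∈ LinearMap.ker g := hex ▸ LinearMap.mem_range_self f a
    simpa using this
  constructor
  · -- projective part
    intro hB
    constructor
    · rintro ⟨s, hs, f', hf'⟩ N _ _ h hh
      have hf'f : ∀ a : A, f' (f a) = s • a := fun a => by
        have := congrArg (fun m => m a) hf'
        simpa using this
      have key := hB N h hh
      rw [isUSEpi_iff'] at key ⊢
      obtain ⟨s₁, hs₁, H⟩ := key
      -- construct σ : C →ₗ B with σ ∘ g = s • id - f ∘ f'
      set ψ : B →ₗ[R] B := s • LinearMap.id - f ∘ₗ f' with hψ
      have hker : LinearMap.ker g ≤ LinearMap.ker ψ := by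
        intro x hx
        rw [← hex] at hx
        obtain ⟨a, rfl⟩ := hx
        simp [hψ, hf'f]
      set σ : C →ₗ[R] B :=
        ((LinearMap.ker g).liftQ ψ hker) ∘ₗ
          (g.quotKerEquivOfSurjective hg).symm.toLinearMap with hσ
      have hσg : ∀ b : B, σ (g b) = ψ b := by
        intro b
        have h1 : (g.quotKerEquivOfSurjective hg).symm (g b) = Submodule.Quotient.mk b := by
          rw [LinearEquiv.symm_apply_eq]
          rfl
        simp [hσ, h1]
      have hgσ : ∀ c : C, g (σ c) = s • c := by
        intro c
        obtain ⟨b, rfl⟩ := hg c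
        rw [hσg]
        simp [hψ, hgf (f' b)]
      refine ⟨s₁ * s, mul_mem hs₁ hs, fun φ => ?_⟩
      obtain ⟨θ, hθ⟩ := H (φ ∘ₗ g)
      refine ⟨θ ∘ₗ σ, ?_⟩
      ext c
      have hθ' : ∀ b : B, h (θ b) = s₁ • φ (g b) := fun b => by
        have := congrArg (fun m => m b) hθ
        simpa using this
      simp [hθ', hgσ, smul_smul, mul_comm]
    · intro hC
      have key := hC C g (isUSEpi_of_surj hg)
      rw [isUSEpi_iff'] at key
      obtain ⟨s, hs, H⟩ := key
      obtain ⟨σ, hσ⟩ := H LinearMap.id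
      have hgσ : ∀ c : C, g (σ c) = s • c := fun c => by
        have := congrArg (fun m => m c) hσ
        simpa using this
      set τ : B →ₗ[R] B := s • LinearMap.id - σ ∘ₗ g with hτ
      have hmem : ∀ b : B, τ b ∈ LinearMap.range f := by
        intro b
        rw [hex, LinearMap.mem_ker]
        simp [hτ, hgσ]
      refine ⟨s, hs, (LinearEquiv.ofInjective f hf).symm.toLinearMap ∘ₗ
        (τ.codRestrict (LinearMap.range f) hmem), ?_⟩
      ext a
      apply hf
      have : τ (f a) = f (s • a) := by simp [hτ, hgf]
      simp only [LinearMap.coe_comp, Function.comp_apply, LinearMap.codRestrict_apply,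
        LinearEquiv.coe_coe, LinearMap.smul_apply, LinearMap.id_coe, id_eq]
      rw [LinearEquiv.ofInjective_symm_apply]
      simp [this]
  · -- injective part
    intro hB
    constructor
    · rintro ⟨s, hs, f', hf'⟩ K _ _ h hh
      have hf'f : ∀ a : A, f' (f a) = s • a := fun a => by
        have := congrArg (fun m => m a) hf'
        simpa using this
      have key := hB K h hh
      rw [isUSEpi_iff'] at key ⊢
      obtain ⟨s₁, hs₁, H⟩ := key
      refine ⟨s₁ * s, mul_mem hs₁ hs, fun φ => ?_⟩
      obtain ⟨θ, hθ⟩ := H (f ∘ₗ φ)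
      have hθ' : ∀ k : K, θ (h k) = s₁ • f (φ k) := fun k => by
        have := congrArg (fun m => m k) hθ
        simpa using this
      refine ⟨f' ∘ₗ θ, ?_⟩
      ext k
      simp [hθ', hf'f, smul_smul, mul_comm]
    · intro hA
      have key := hA A f (isUSMono_of_inj hf)
      rw [isUSEpi_iff'] at key
      obtain ⟨s, hs, H⟩ := key
      obtain ⟨f', hf'⟩ := H LinearMap.id
      exact ⟨s, hs, f', hf'⟩
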